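/- The quasi-standard geometric representation σ_M : W → GL(V) of the Coxeter group associated to an E-GCM is faithful. -/

import Mathlib

open Real

/-- The quasi-standard reflection `s_i` as a linear endomorphism of `V = ℝⁿ` with basis of
simple roots `α_j = Pi.single j 1`: `s_i(v) = v − 2B(α_i,v)α_i` where `B(α_i,α_j) = M_ij/2`. -/
noncomputable def reflLin {n : ℕ} (M : Matrix (Fin n) (Fin n) ℝ) (i : Fin n) :
    Module.End ℝ (Fin n → ℝ) where
  toFun v := v - (∑ j, M i j * v j) • (Pi.single i 1 : Fin n → ℝ)
  map_add' v w := by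
    ext t
    simp only [Pi.add_apply, Pi.sub_apply, Pi.smul_apply, smul_eq_mul, mul_add,
      Finset.sum_add_distrib]
    ring
  map_smul' c v := by
    ext t
    simp only [Pi.smul_apply, Pi.sub_apply, smul_eq_mul, RingHom.id_apply]
    rw [show (∑ j, M i j * (c * v j)) = c * ∑ j, M i j * v j from by
      rw [Finset.mul_sum]; exact Finset.sum_congr rfl fun j _ => by ring]
    ring

/-- `M` is an E-generalized Cartan matrix whose amplitude products correspond to the
Coxeter matrix `K` (where `K i j = 0` encodes `m_ij = ∞`). -/
def IsEGCM {n : ℕ} (M : Matrix (Fin n) (Fin n) ℝ) (K : CoxeterMatrix (Fin n)) : Prop :=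
  (∀ i, M i i = 2) ∧ (∀ i j, i ≠ j → M i j ≤ 0) ∧ (∀ i j, M i j = 0 ↔ M j i = 0) ∧
  (∀ i j, i ≠ j →
    (K i j = 0 ∧ 4 ≤ M i j * M j i) ∨
    (2 ≤ K i j ∧ M i j * M j i = 4 * Real.cos (π / (K i j : ℝ)) ^ 2))

/-!
Tits' positivity argument. If `ℓ(w s_i) > ℓ(w)` then `w α_i` has nonnegative coordinates, by
induction on `ℓ(w)`: for a right descent `j` of `w`, split off the longest suffix of `w` alternating
in `s_i, s_j`, so `w = u · (⋯ s_i s_j)` with `i, j` ascents of `u` and fewer than `m_ij` letters in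
the suffix. The suffix maps `α_i` into the cone spanned by `α_i, α_j`: its coefficients are
ratios of `sin (k π / m)` when `M_ij M_ji = 4 cos² (π / m)`, and stay nonnegative by a growth
invariant when `M_ij M_ji ≥ 4`. Now if `w ≠ 1` acts trivially and `i` is a right descent of `w`,
then `w s_i` ascends at `i` yet sends `α_i` to `-α_i`.
-/

/-- `(c, d) = dihedralRootCoeff (M i j * M j i) t` encodes the image `c α_i - M_ji d α_j` of `α_i`
under the alternating product `⋯ s_i s_j` of `t` reflections; see
`map_wordProd_alternatingWord_apply_single`. -/
noncomputable def dihedralRootCoeff (p : ℝ) : ℕ → ℝ × ℝ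
  | 0 => (1, 0)
  | t + 1 =>
    let c := dihedralRootCoeff p t
    if Even t then (c.1, c.1 - c.2) else (p * c.2 - c.1, c.2)

section dihedralRootCoeff

variable {p : ℝ} {t : ℕ}

lemma dihedralRootCoeff_succ_of_even (ht : Even t) :
    dihedralRootCoeff p (t + 1)
      = ((dihedralRootCoeff p t).1, (dihedralRootCoeff p t).1 - (dihedralRootCoeff p t).2) := by
  rw [dihedralRootCoeff, if_pos ht]

lemma dihedralRootCoeff_succ_of_not_even (ht : ¬Even t) :
    dihedralRootCoeff p (t + 1)
      = (p * (dihedralRootCoeff p t).2 - (dihedralRootCoeff p t).1, (dihedralRootCoeff p t).2) := by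
  rw [dihedralRootCoeff, if_neg ht]

lemma dihedralRootCoeff_nonneg_of_four_le (hp : 4 ≤ p) (t : ℕ) :
    0 ≤ (dihedralRootCoeff p t).1 ∧ 0 ≤ (dihedralRootCoeff p t).2 := by
  suffices h : 0 ≤ (dihedralRootCoeff p t).1 ∧ 0 ≤ (dihedralRootCoeff p t).2 ∧
      if Even t then 2 * (dihedralRootCoeff p t).2 ≤ (dihedralRootCoeff p t).1
      else (dihedralRootCoeff p t).1 ≤ 2 * (dihedralRootCoeff p t).2 from ⟨h.1, h.2.1⟩
  induction t with
  | zero => norm_num [dihedralRootCoeff]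
  | succ t ih =>
    obtain ⟨hc, hd, hcd⟩ := ih
    by_cases ht : Even t
    · rw [if_pos ht] at hcd
      rw [dihedralRootCoeff_succ_of_even ht, if_neg (by simpa [Nat.even_add_one])]
      exact ⟨hc, by linarith, by linarith⟩
    · rw [if_neg ht] at hcd
      rw [dihedralRootCoeff_succ_of_not_even ht, if_pos (Nat.even_add_one.mpr ht)]
      exact ⟨by nlinarith, hd, by nlinarith⟩

lemma sin_add_two_mul_eq (θ x : ℝ) :
    sin ((x + 2) * θ) = 2 * cos θ * sin ((x + 1) * θ) - sin (x * θ) := by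
  have h := sin_add ((x + 1) * θ) θ
  have h' := sin_sub ((x + 1) * θ) θ
  rw [show (x + 1) * θ - θ = x * θ by ring] at h'
  rw [show (x + 2) * θ = (x + 1) * θ + θ by ring, h]
  linarith

lemma dihedralRootCoeff_four_mul_cos_sq (θ : ℝ) (t : ℕ) :
    (dihedralRootCoeff (4 * cos θ ^ 2) t).1 * sin θ
        = sin ((if Even t then t + 1 else t : ℕ) * θ) ∧
      (dihedralRootCoeff (4 * cos θ ^ 2) t).2 * sin (2 * θ)
        = sin ((if Even t then t else t + 1 : ℕ) * θ) := by
  induction t with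
  | zero => simp [dihedralRootCoeff]
  | succ t ih =>
    obtain ⟨hc, hd⟩ := ih
    have hrec := sin_add_two_mul_eq θ t
    rw [sin_two_mul] at hd ⊢
    by_cases ht : Even t
    · have ht' : ¬Even (t + 1) := by simpa [Nat.even_add_one]
      simp only [ht, ht', ↓reduceIte] at hc hd ⊢
      rw [dihedralRootCoeff_succ_of_even ht]
      push_cast at hc hd ⊢
      refine ⟨hc, ?_⟩
      rw [show ((t : ℝ) + 1 + 1) = t + 2 by ring, hrec, ← hd, ← hc]
      ring
    · have ht' : Even (t + 1) := Nat.even_add_one.mpr ht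
      simp only [ht, ht', ↓reduceIte] at hc hd ⊢
      rw [dihedralRootCoeff_succ_of_not_even ht]
      push_cast at hc hd ⊢
      refine ⟨?_, hd⟩
      rw [show ((t : ℝ) + 1 + 1) = t + 2 by ring, hrec, ← hd, ← hc]
      ring

lemma dihedralRootCoeff_nonneg_of_lt {m : ℕ} (hm : 2 ≤ m) (ht : t < m) :
    0 ≤ (dihedralRootCoeff (4 * cos (π / m) ^ 2) t).1 ∧
      0 ≤ (dihedralRootCoeff (4 * cos (π / m) ^ 2) t).2 := by
  obtain rfl | hm := hm.eq_or_lt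
  · interval_cases t <;> norm_num [dihedralRootCoeff]
  have hθ : 0 < π / m := by positivity
  have hmθ : m * (π / m) = π := by field_simp
  have hsin_nonneg : ∀ k : ℕ, k ≤ m → 0 ≤ sin (k * (π / m)) := fun k hk =>
    sin_nonneg_of_nonneg_of_le_pi (by positivity)
      ((mul_le_mul_of_nonneg_right (Nat.cast_le.mpr hk) hθ.le).trans_eq hmθ)
  have hsin_pos : ∀ k : ℕ, 0 < k → k < m → 0 < sin (k * (π / m)) := fun k hk hkm =>
    sin_pos_of_pos_of_lt_pi (by positivity)
      ((mul_lt_mul_of_pos_right (Nat.cast_lt.mpr hkm) hθ).trans_eq hmθ)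
  obtain ⟨hc, hd⟩ := dihedralRootCoeff_four_mul_cos_sq (π / m) t
  constructor
  · refine nonneg_of_mul_nonneg_left ?_ (by simpa using hsin_pos 1 one_pos (by omega))
    rw [hc]; exact hsin_nonneg _ (by split <;> omega)
  · refine nonneg_of_mul_nonneg_left ?_ (by exact_mod_cast hsin_pos 2 two_pos (by omega))
    rw [hd]; exact hsin_nonneg _ (by split <;> omega)

end dihedralRootCoeff

namespace CoxeterSystem

variable {B W : Type*} [Group W] {M : CoxeterMatrix B} (cs : CoxeterSystem M W)

theorem lt_of_mul_alternatingWord {w u : W} {i j : B} {t : ℕ} (hi : ¬cs.IsRightDescent w i)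
    (hw : w = u * cs.wordProd (alternatingWord i j t)) (hlen : cs.length u + t = cs.length w)
    (hM : M i j ≠ 0) : t < M i j := by
  subst hw
  have hred : cs.IsReduced (alternatingWord i j t) := by
    have hle := cs.length_wordProd_le (alternatingWord i j t)
    have := cs.length_mul_le u (cs.wordProd (alternatingWord i j t))
    rw [length_alternatingWord] at hle
    rw [IsReduced, length_alternatingWord]
    omega
  have hle : t ≤ M i j := not_lt.mp fun h => cs.not_isReduced_alternatingWord i j hM h hred
  refine hle.lt_of_ne fun ht => hi ?_
  subst ht
  have hbraid : cs.wordProd (alternatingWord i j (M i j)) * cs.simple i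
      = cs.wordProd (alternatingWord i j (M i j - 1)) := by
    have h := cs.prod_alternatingWord_eq_prod_alternatingWord_sub i j (M i j) (by omega)
    rw [show M i j * 2 - M i j = M i j - 1 + 1 by omega] at h
    rw [h, alternatingWord_succ, wordProd_concat, simple_mul_simple_cancel_right]
  have hmul := cs.length_mul_le u (cs.wordProd (alternatingWord i j (M i j - 1)))
  have hword := cs.length_wordProd_le (alternatingWord i j (M i j - 1))
  rw [length_alternatingWord] at hword
  rw [IsRightDescent, mul_assoc, hbraid]
  omega

theorem not_isRightDescent_of_length_mul_cons {u : W} {y : B} {ω : List B}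
    (h : cs.length u + (y :: ω).length ≤ cs.length (u * cs.wordProd (y :: ω))) :
    ¬cs.IsRightDescent u y := by
  have := cs.length_mul_le (u * cs.simple y) (cs.wordProd ω)
  have := cs.length_wordProd_le ω
  rw [wordProd_cons, ← mul_assoc] at h
  rw [IsRightDescent]
  simp only [List.length_cons] at h
  omega

theorem exists_mul_alternatingWord {w : W} {i j : B} (hi : ¬cs.IsRightDescent w i)
    (hj : cs.IsRightDescent w j) :
    ∃ u t, w = u * cs.wordProd (alternatingWord i j t) ∧ cs.length u + t = cs.length w ∧
      0 < t ∧ (M i j ≠ 0 → t < M i j) ∧ ¬cs.IsRightDescent u i ∧ ¬cs.IsRightDescent u j := by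
  suffices h : ∀ k (u : W) t, cs.length u = k → w = u * cs.wordProd (alternatingWord i j t) →
      cs.length u + t = cs.length w → 0 < t →
      ∃ u t, w = u * cs.wordProd (alternatingWord i j t) ∧ cs.length u + t = cs.length w ∧
        0 < t ∧ ¬cs.IsRightDescent u i ∧ ¬cs.IsRightDescent u j by
    obtain ⟨u, t, hw, hlen, ht, hui, huj⟩ := h _ (w * cs.simple j) 1 rfl
      (by simp [alternatingWord]) (by rw [isRightDescent_iff] at hj; omega) one_pos
    exact ⟨u, t, hw, hlen, ht, cs.lt_of_mul_alternatingWord hi hw hlen, hui, huj⟩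
  intro k
  induction k using Nat.strong_induction_on with
  | _ k ih =>
  rintro u (_ | t) rfl hw hlen ht
  · exact absurd ht (lt_irrefl 0)
  set x := if Even (t + 1) then j else i with hx_def
  by_cases hx : cs.IsRightDescent u x
  · rw [isRightDescent_iff] at hx
    refine ih (cs.length (u * cs.simple x)) (by omega) _ (t + 1 + 1) rfl ?_ (by omega) (by omega)
    rw [hw, alternatingWord_succ' i j (t + 1), wordProd_cons, mul_assoc,
      simple_mul_simple_cancel_left]
  · have hy : ¬cs.IsRightDescent u (if Even t then j else i) := by
      refine cs.not_isRightDescent_of_length_mul_cons (ω := alternatingWord i j t) ?_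
      rw [← alternatingWord_succ', ← hw, length_alternatingWord]
      omega
    refine ⟨u, t + 1, hw, hlen, ht, ?_⟩
    by_cases he : Even t <;> simp_all [Nat.even_add_one]

end CoxeterSystem

section reflLin

open Matrix

variable {n : ℕ} (M : Matrix (Fin n) (Fin n) ℝ)

lemma reflLin_apply (i : Fin n) (v : Fin n → ℝ) :
    reflLin M i v = v - (M *ᵥ v) i • Pi.single i 1 := rfl

lemma reflLin_single_self {i : Fin n} (hi : M i i = 2) :
    reflLin M i (Pi.single i 1) = -Pi.single i 1 := by
  rw [reflLin_apply, mulVec_single_one, col_apply, hi]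
  module

lemma reflLin_smul_single_add_smul_single (x i j : Fin n) (c d : ℝ) :
    reflLin M x (c • Pi.single i 1 + d • Pi.single j 1)
      = c • Pi.single i 1 + d • Pi.single j 1 - (c * M x i + d * M x j) • Pi.single x 1 := by
  simp only [map_add, map_smul, reflLin_apply, mulVec_single_one, col_apply]
  module

lemma map_wordProd_alternatingWord_apply_single {W : Type*} [Group W] {K : CoxeterMatrix (Fin n)}
    (cs : CoxeterSystem K W) {ρ : W →* Module.End ℝ (Fin n → ℝ)}
    (hρ : ∀ i, ρ (cs.simple i) = reflLin M i) (hdiag : ∀ i, M i i = 2) (i j : Fin n) (t : ℕ) :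
    ρ (cs.wordProd (CoxeterSystem.alternatingWord i j t)) (Pi.single i 1)
      = (dihedralRootCoeff (M i j * M j i) t).1 • Pi.single i 1
        + (-M j i * (dihedralRootCoeff (M i j * M j i) t).2) • Pi.single j 1 := by
  induction t with
  | zero => simp [CoxeterSystem.alternatingWord, dihedralRootCoeff]
  | succ t ih =>
    rw [CoxeterSystem.alternatingWord_succ', cs.wordProd_cons, map_mul, Module.End.mul_apply, ih]
    by_cases ht : Even t
    · rw [if_pos ht, hρ, reflLin_smul_single_add_smul_single, hdiag,
        dihedralRootCoeff_succ_of_even ht]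
      module
    · rw [if_neg ht, hρ, reflLin_smul_single_add_smul_single, hdiag,
        dihedralRootCoeff_succ_of_not_even ht]
      module

end reflLin

section IsEGCM

variable {n : ℕ} {M : Matrix (Fin n) (Fin n) ℝ} {K : CoxeterMatrix (Fin n)}

lemma IsEGCM.dihedralRootCoeff_nonneg (hMK : IsEGCM M K) {i j : Fin n} (hij : i ≠ j) {t : ℕ}
    (ht : K i j ≠ 0 → t < K i j) :
    0 ≤ (dihedralRootCoeff (M i j * M j i) t).1 ∧ 0 ≤ (dihedralRootCoeff (M i j * M j i) t).2 := by
  rcases hMK.2.2.2 i j hij with ⟨hK, hp⟩ | ⟨hK, hp⟩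
  · exact dihedralRootCoeff_nonneg_of_four_le hp t
  · rw [hp]
    exact dihedralRootCoeff_nonneg_of_lt hK (ht (by omega))

theorem IsEGCM.apply_single_nonneg {W : Type*} [Group W] (hMK : IsEGCM M K)
    (cs : CoxeterSystem K W) {ρ : W →* Module.End ℝ (Fin n → ℝ)}
    (hρ : ∀ i, ρ (cs.simple i) = reflLin M i) {w : W} {i : Fin n}
    (hi : ¬cs.IsRightDescent w i) : 0 ≤ ρ w (Pi.single i 1) := by
  induction h : cs.length w using Nat.strong_induction_on generalizing w i with
  | _ k ih =>
  subst h
  by_cases hw : w = 1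
  · simp [hw, Pi.single_nonneg]
  obtain ⟨j, hj⟩ := cs.exists_rightDescent_of_ne_one hw
  have hij : i ≠ j := by rintro rfl; exact hi hj
  obtain ⟨u, t, rfl, hlen, htpos, ht, hui, huj⟩ := cs.exists_mul_alternatingWord hi hj
  obtain ⟨hc, hd⟩ := hMK.dihedralRootCoeff_nonneg hij ht
  have hMji : 0 ≤ -M j i := neg_nonneg.mpr (hMK.2.1 j i hij.symm)
  rw [map_mul, Module.End.mul_apply,
    map_wordProd_alternatingWord_apply_single M cs hρ hMK.1, map_add, map_smul, map_smul]
  exact add_nonneg (smul_nonneg hc (ih _ (by omega) hui rfl))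
    (smul_nonneg (mul_nonneg hMji hd) (ih _ (by omega) huj rfl))

end IsEGCM

/-- The quasi-standard geometric representation of the Coxeter group associated to an
E-GCM is faithful. -/
theorem quasi_standard_faithful {n : ℕ} {W : Type*} [Group W]
    (M : Matrix (Fin n) (Fin n) ℝ) (K : CoxeterMatrix (Fin n)) (hMK : IsEGCM M K)
    (cs : CoxeterSystem K W)
    (ρ : W →* Module.End ℝ (Fin n → ℝ))
    (hρ : ∀ i, ρ (cs.simple i) = reflLin M i) :
    Function.Injective ρ := by
  refine (injective_iff_map_eq_one ρ).mpr fun w hw => ?_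
  by_contra hw1
  obtain ⟨i, hi⟩ := cs.exists_rightDescent_of_ne_one hw1
  have hpos := hMK.apply_single_nonneg cs hρ (cs.isRightDescent_iff_not_isRightDescent_mul.mp hi)
  rw [map_mul, hw, one_mul, hρ, reflLin_single_self M (hMK.1 i)] at hpos
  exact absurd (hpos i) (by norm_num)
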